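/- Let f be a function symbol of L of arity n, and suppose that for every function symbol g with g < f (say of arity m) and every tuple b of m closed terms all lying in W_p = Acc(<_p), the term g(b) lies in W_p. Then for every tuple a of n closed terms with all components in W_p, the following progressiveness holds: if f(b) ∈ W_p for every tuple b of n closed terms with all components in W_p and b lexicographically smaller than a with respect to <_p, then f(a) ∈ W_p. -/
import Mathlib

/-- Closed terms over a signature `F` with arity function `ar`. -/
inductive Trm (F : Type) (ar : F → ℕ) : Type
  | app : (f : F) → (Fin (ar f) → Trm F ar) → Trm F ar

/-- The finite approximations `<_p` of the lexicographic path order: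
no terms satisfy `s <_0 t`, and `s <_{p+1} f(t₁,…,tₙ)` iff (i) `s = tᵢ` or `s <_p tᵢ`
for some `i`, or (ii) `s = g(s₁,…,s_m)` with `g < f` and `sⱼ <_p f(t₁,…,tₙ)` for all `j`, or
(iii) `s = f(s₁,…,sₙ)` with `(s₁,…,sₙ)` lexicographically smaller than `(t₁,…,tₙ)`
w.r.t. `<_p` and `sⱼ <_p f(t₁,…,tₙ)` for all `j`. -/
def LpoApprox {F : Type} {ar : F → ℕ} (prec : F → F → Prop) :
    ℕ → Trm F ar → Trm F ar → Prop
  | 0, _, _ => False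
  | (p+1), s, Trm.app f ts =>
      (∃ i, s = ts i ∨ LpoApprox prec p s (ts i)) ∨
      (∃ g, ∃ ss : Fin (ar g) → Trm F ar, s = Trm.app g ss ∧ prec g f ∧
        ∀ j, LpoApprox prec p (ss j) (Trm.app f ts)) ∨
      (∃ ss : Fin (ar f) → Trm F ar, s = Trm.app f ss ∧
        (∃ i : Fin (ar f), (∀ j : Fin (ar f), j < i → ss j = ts j) ∧
          LpoApprox prec p (ss i) (ts i)) ∧
        ∀ j, LpoApprox prec p (ss j) (Trm.app f ts))

/-- Lexicographic extension of a relation `r` to `n`-tuples: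
`b <_lex a` iff there is an index `i` with `b j = a j` for all `j < i` and `r (b i) (a i)`. -/
def FinLex {α : Type} (r : α → α → Prop) {n : ℕ} (b a : Fin n → α) : Prop :=
  ∃ i : Fin n, (∀ j : Fin n, j < i → b j = a j) ∧ r (b i) (a i)

theorem lpo_mono {F : Type} {ar : F → ℕ} (prec : F → F → Prop) :
    ∀ p (s t : Trm F ar), LpoApprox prec p s t → LpoApprox prec (p+1) s t := by
  intro p
  induction p with
  | zero => intro s t h; exact h.elim
  | succ p ih =>
    rintro s ⟨f, ts⟩ h
    simp only [LpoApprox] at h ⊢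
    rcases h with ⟨i, hi⟩ | ⟨g, ss, rfl, hg, hss⟩ | ⟨ss, rfl, ⟨i, hij, hlt⟩, hall⟩
    · exact Or.inl ⟨i, hi.imp id (ih _ _)⟩
    · exact Or.inr (Or.inl ⟨g, ss, rfl, hg, fun j => ih _ _ (hss j)⟩)
    · exact Or.inr (Or.inr ⟨ss, rfl, ⟨i, hij, ih _ _ hlt⟩, fun j => ih _ _ (hall j)⟩)


/-- If for every function symbol `g` with `g < f` and every tuple `b` of closed terms all
lying in `W_p = Acc (<_p)` the term `g(b)` lies in `W_p`, then for every tuple `a` of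
`ar f` closed terms with all components in `W_p`: if `f(b) ∈ W_p` for every tuple `b`
with all components in `W_p` and `b` lexicographically smaller than `a` w.r.t. `<_p`,
then `f(a) ∈ W_p`. -/
theorem stmt_11 {F : Type} {ar : F → ℕ} (prec : F → F → Prop)
    (hirr : ∀ f, ¬ prec f f) (htr : ∀ f g h, prec f g → prec g h → prec f h)
    (p : ℕ) (f : F)
    (hbelow : ∀ g : F, prec g f → ∀ b : Fin (ar g) → Trm F ar,
      (∀ i, Acc (LpoApprox prec p) (b i)) → Acc (LpoApprox prec p) (Trm.app g b)) :
    ∀ a : Fin (ar f) → Trm F ar, (∀ i, Acc (LpoApprox prec p) (a i)) →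
      ((∀ b : Fin (ar f) → Trm F ar, (∀ i, Acc (LpoApprox prec p) (b i)) →
          FinLex (LpoApprox prec p) b a → Acc (LpoApprox prec p) (Trm.app f b)) →
        Acc (LpoApprox prec p) (Trm.app f a)) := by
  intro a _ha hprog
  cases p with
  | zero => exact ⟨_, fun s hs => hs.elim⟩
  | succ p =>
    have key : ∀ s : Trm F ar, LpoApprox prec (p+1) s (Trm.app f a) →
        Acc (LpoApprox prec (p+1)) s := by
      intro s
      induction s with
      | app g ss ihs =>
        intro hs
        simp only [LpoApprox] at hs
        rcases hs with ⟨i, hi | hi⟩ | ⟨g', ss', heq, hg, hss⟩ | ⟨ss', heq, ⟨i, hij, hlt⟩, hall⟩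
        · exact hi ▸ _ha i
        · exact (_ha i).inv (lpo_mono prec p _ _ hi)
        · injection heq with h1 h2
          subst h1
          cases eq_of_heq h2
          exact hbelow g hg ss (fun j => ihs j (lpo_mono prec p _ _ (hss j)))
        · injection heq with h1 h2
          subst h1
          cases eq_of_heq h2
          refine hprog ss (fun j => ihs j (lpo_mono prec p _ _ (hall j)))
            ⟨i, hij, lpo_mono prec p _ _ hlt⟩
    exact ⟨_, fun s hs => key s hs⟩
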